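/- arXiv:1006.2313 — 4 statements merged into one kernel-verified Lean document; each statement's English description precedes it below -/
import Mathlib

section
/- For the birth-death chain on ℕ with birth rate λ and death rate μ n a/(β + n a) (fixed β > 0), the stationary distribution scaled by a/β is a negative binomial-type law π_β with π_β(n) ∝ ρ^n · Γ(β/a + 1 + n)/(Γ(β/a+1) n!) where ρ = λ/μ < 1, and for any A > ρ/(1−ρ), π_β([⌈Aβ/a⌉, ∞)) → 0 as β → ∞. -/
/-! Writing `r = β/a + 1`, `π β` is the negative binomial law with shape `r` and parameter `ρ`,
whose generating function is `∑ π β n θ^n = ((1 - ρ)/(1 - ρθ))^r` by the binomial series. Chernoff's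
bound then controls the mass of `[Aβ/a, ∞)` by `θ^(-Aβ/a) ((1 - ρ)/(1 - ρθ))^(β/a + 1)`, which decays
geometrically in `β/a` once `(1 - ρ) < (1 - ρθ) θ^A`. Such a `θ > 1` exists because the derivative of
`θ ↦ (1 - ρθ) θ^A` at `θ = 1` is `A(1 - ρ) - ρ > 0`. -/

section

open Real Nat

lemma Real.Gamma_add_nat_div_Gamma_eq {r : ℝ} (hr : 0 < r) (n : ℕ) :
    Gamma (r + n) / Gamma r = (ascPochhammer ℝ n).eval r := by
  induction n with
  | zero => simp [(Gamma_pos_of_pos hr).ne']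
  | succ n ih =>
    rw [ascPochhammer_succ_eval, ← ih, Nat.cast_succ, ← add_assoc,
      Gamma_add_one (by positivity)]
    ring

lemma Real.Gamma_add_nat_div_mul_factorial_eq_choose {r : ℝ} (hr : 0 < r) (n : ℕ) :
    Gamma (r + n) / (Gamma r * n !) = Ring.choose (r + n - 1) n := by
  rw [← Ring.multichoose_eq, ← div_div, Gamma_add_nat_div_Gamma_eq hr,
    ← Polynomial.ascPochhammer_smeval_eq_eval, ← Ring.factorial_nsmul_multichoose_eq_ascPochhammer,
    nsmul_eq_mul, mul_div_cancel_left₀ _ (by positivity)]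

lemma Real.hasSum_Gamma_add_nat_div_mul_factorial_mul_pow {r x : ℝ} (hr : 0 < r) (hx : |x| < 1) :
    HasSum (fun n : ℕ ↦ Gamma (r + n) / (Gamma r * n !) * x ^ n) (1 / (1 - x) ^ r) := by
  have := (one_div_one_sub_rpow_hasFPowerSeriesOnBall_zero r).hasSum
    (y := x) (by simpa [enorm_eq_nnnorm, ← NNReal.coe_lt_one] using hx)
  rw [zero_add] at this
  simp only [FormalMultilinearSeries.ofScalars_apply_eq, smul_eq_mul] at this
  simpa only [Gamma_add_nat_div_mul_factorial_eq_choose hr] using this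

lemma tsum_ite_le_of_hasSum_mul_pow {f : ℕ → ℝ} {θ M : ℝ} (x : ℝ) (hf : ∀ n, 0 ≤ f n)
    (hθ : 1 ≤ θ) (hM : HasSum (fun n ↦ f n * θ ^ n) M) :
    ∑' n : ℕ, (if x ≤ n then f n else 0) ≤ θ ^ (-x) * M := by
  have hM' := hM.mul_left (θ ^ (-x))
  have hle : ∀ n : ℕ, (if x ≤ n then f n else 0) ≤ θ ^ (-x) * (f n * θ ^ n) := by
    intro n
    split_ifs with hxn
    · have h1 : 1 ≤ θ ^ (-x) * θ ^ n := by
        rw [← rpow_natCast, ← rpow_add (by linarith)]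
        exact one_le_rpow hθ (by linarith)
      nlinarith [hf n]
    · have := hf n
      positivity
  have hnonneg : ∀ n : ℕ, 0 ≤ if x ≤ n then f n else 0 := fun n ↦ ite_nonneg (hf n) le_rfl
  exact ((Summable.of_nonneg_of_le hnonneg hle hM'.summable).tsum_le_tsum hle
    hM'.summable).trans_eq hM'.tsum_eq

noncomputable def negBinomialWeight (p r : ℝ) (n : ℕ) : ℝ :=
  (1 - p) ^ r * p ^ n * Gamma (r + n) / (Gamma r * n !)

section NegBinomial

variable {p r : ℝ}

lemma negBinomialWeight_nonneg (hp0 : 0 ≤ p) (hp1 : p < 1) (hr : 0 < r) (n : ℕ) :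
    0 ≤ negBinomialWeight p r n := by
  have := Gamma_pos_of_pos (by positivity : 0 < r + n)
  have := Gamma_pos_of_pos hr
  have := rpow_nonneg (sub_nonneg.2 hp1.le) r
  unfold negBinomialWeight
  positivity

lemma hasSum_negBinomialWeight_mul_pow (hp : p < 1) (hr : 0 < r) {t : ℝ} (hpt : |p * t| < 1) :
    HasSum (fun n ↦ negBinomialWeight p r n * t ^ n) (((1 - p) / (1 - p * t)) ^ r) := by
  have hterm (n : ℕ) : negBinomialWeight p r n * t ^ n =
      (1 - p) ^ r * (Gamma (r + n) / (Gamma r * n !) * (p * t) ^ n) := by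
    rw [negBinomialWeight, mul_pow]
    ring
  rw [div_rpow (by linarith) (by linarith [le_abs_self (p * t)]), div_eq_mul_one_div]
  simp_rw [hterm]
  exact (Real.hasSum_Gamma_add_nat_div_mul_factorial_mul_pow hr hpt).mul_left _

lemma tsum_ite_negBinomialWeight_le {θ : ℝ} (hp0 : 0 ≤ p) (hp1 : p < 1) (hr : 0 < r)
    (hθ : 1 ≤ θ) (hpθ : p * θ < 1) (x : ℝ) :
    ∑' n : ℕ, (if x ≤ n then negBinomialWeight p r n else 0) ≤
      θ ^ (-x) * ((1 - p) / (1 - p * θ)) ^ r := by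
  refine tsum_ite_le_of_hasSum_mul_pow x (negBinomialWeight_nonneg hp0 hp1 hr) hθ
    (hasSum_negBinomialWeight_mul_pow hp1 hr ?_)
  rw [abs_of_nonneg (by positivity)]
  exact hpθ

end NegBinomial

lemma HasDerivAt.exists_gt_of_deriv_pos {f : ℝ → ℝ} {f' x : ℝ} (hf : HasDerivAt f f' x)
    (hf' : 0 < f') : ∃ y, x < y ∧ f x < f y := by
  obtain ⟨t, hslope, ht⟩ :=
    ((hf.tendsto_slope_zero_right.eventually (eventually_gt_nhds hf')).and
      self_mem_nhdsWithin).exists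
  refine ⟨x + t, by linarith [show 0 < t from ht], ?_⟩
  have : 0 < f (x + t) - f x := (pos_iff_pos_of_mul_pos hslope).1 (inv_pos.2 ht)
  linarith

lemma exists_one_sub_mul_mul_rpow_gt {ρ A : ℝ} (hρ : ρ < 1) (hA : ρ / (1 - ρ) < A) :
    ∃ θ, 1 < θ ∧ 1 - ρ < (1 - ρ * θ) * θ ^ A := by
  have hd : HasDerivAt (fun θ ↦ (1 - ρ * θ) * θ ^ A) (-ρ + (1 - ρ) * A) 1 := by
    simpa using ((hasDerivAt_id' 1).const_mul ρ |>.const_sub 1).fun_mul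
      (hasDerivAt_rpow_const (p := A) (Or.inl one_ne_zero))
  have hpos : 0 < -ρ + (1 - ρ) * A := by
    rw [div_lt_iff₀ (by linarith)] at hA
    linarith
  simpa using hd.exists_gt_of_deriv_pos hpos

end

theorem negative_binomial_tail_vanishes_general (a ρ : ℝ)
    (ha : 0 < a) (hρ0 : 0 < ρ) (hρ1 : ρ < 1)
    (π : ℕ → ℕ → ℝ)
    (hπ : ∀ (β n : ℕ), π β n =
      (1 - ρ) ^ ((β : ℝ) / a + 1) * ρ ^ n *
        Real.Gamma ((β : ℝ) / a + 1 + n) /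
        (Real.Gamma ((β : ℝ) / a + 1) * n.factorial))
    (A : ℝ) (hA : ρ / (1 - ρ) < A) :
    Filter.Tendsto
      (fun β : ℕ => ∑' n : ℕ, if A * β / a ≤ (n : ℝ) then π β n else 0)
      Filter.atTop (nhds 0) := by
  have hr (β : ℕ) : 0 < (β : ℝ) / a + 1 := by positivity
  have hπw (β : ℕ) : π β = negBinomialWeight ρ ((β : ℝ) / a + 1) := funext (hπ β)
  obtain ⟨θ, hθ1, hθ⟩ := exists_one_sub_mul_mul_rpow_gt hρ1 hA
  have hθA : 0 < θ ^ A := Real.rpow_pos_of_pos (by linarith) A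
  have hρθ : 0 < 1 - ρ * θ := pos_of_mul_pos_left (by linarith) hθA.le
  set M := (1 - ρ) / (1 - ρ * θ)
  have hM : 0 < M := div_pos (by linarith) hρθ
  have hq : M * θ ^ (-A) < 1 := by
    rwa [Real.rpow_neg (by linarith), ← div_eq_mul_inv, div_div, div_lt_one (by positivity)]
  have hbound (β : ℕ) : ∑' n : ℕ, (if A * β / a ≤ (n : ℝ) then π β n else 0) ≤
      M * (M * θ ^ (-A)) ^ ((β : ℝ) / a) := calc
    _ ≤ θ ^ (-(A * β / a)) * M ^ ((β : ℝ) / a + 1) := by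
      rw [hπw]
      exact tsum_ite_negBinomialWeight_le hρ0.le hρ1 (hr β) hθ1.le (by linarith) _
    _ = M * (M * θ ^ (-A)) ^ ((β : ℝ) / a) := by
      rw [Real.mul_rpow hM.le (by positivity), ← Real.rpow_mul (by linarith),
        Real.rpow_add_one hM.ne', neg_mul, mul_div_assoc]
      ring
  have hnonneg (β : ℕ) : 0 ≤ ∑' n : ℕ, (if A * β / a ≤ (n : ℝ) then π β n else 0) :=
    tsum_nonneg fun n ↦ ite_nonneg (hπw β ▸ negBinomialWeight_nonneg hρ0.le hρ1 (hr β) n) le_rfl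
  have hq0 : 0 < M * θ ^ (-A) := by positivity
  refine squeeze_zero hnonneg hbound ?_
  simpa using ((tendsto_rpow_atTop_of_base_lt_one _ (by linarith) hq).comp
    (tendsto_natCast_atTop_atTop.atTop_div_const ha)).const_mul M

/-- The stationary distribution of the scaled birth-death chain with birth
rate `λβ` and death rate `μβ·(na)/(β+na)` is the negative-binomial-type law
`π_β(n) = (1−ρ)^{β/a+1} ρ^n Γ(β/a+1+n)/(Γ(β/a+1) n!)` with `ρ = λ/μ < 1`;
for any `A > ρ/(1−ρ)`, the mass beyond level `Aβ/a` vanishes as `β → ∞`. -/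
theorem negative_binomial_tail_vanishes (lam mu a ρ : ℝ)
    (hlam : 0 < lam) (hmu : 0 < mu) (ha : 0 < a)
    (hρdef : ρ = lam / mu) (hρ0 : 0 < ρ) (hρ1 : ρ < 1)
    (π : ℕ → ℕ → ℝ)
    (hπ : ∀ (β n : ℕ), π β n =
      (1 - ρ) ^ ((β : ℝ) / a + 1) * ρ ^ n *
        Real.Gamma ((β : ℝ) / a + 1 + n) /
        (Real.Gamma ((β : ℝ) / a + 1) * n.factorial))
    (A : ℝ) (hA : ρ / (1 - ρ) < A) :
    Filter.Tendsto
      (fun β : ℕ => ∑' n : ℕ, if A * β / a ≤ (n : ℝ) then π β n else 0)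
      Filter.atTop (nhds 0) :=
  negative_binomial_tail_vanishes_general a ρ ha hρ0 hρ1 π hπ A hA
end

section
/- Let F_0, F_1 : ℝ_+ → ℝ_+ be differentiable with F_0 + F_1 > 0 and suppose F_0(t)+F_1(t) ≤ 1 + (λ_0+λ_1)t with λ_0, λ_1 > 0. Set α(t) = F_0(t)/(F_0(t)+F_1(t)) and suppose α'(t) ≥ κ/(F_0(t)+F_1(t)) whenever α(t) ≤ c, for constants κ > 0, c ∈ (0,1). Then whenever α(s) ≤ c for all s ∈ [0,t], one has α(t) ≥ α(0) + (κ/(λ_0+λ_1))·log(1+(λ_0+λ_1)t). In particular α exceeds c by time T = ((exp(c(λ_0+λ_1)/κ) − 1)/(λ_0+λ_1)). -/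
/-!
While `α ≤ c`, the bound `F₀ + F₁ ≤ 1 + λt` turns the hypothesis into
`α' ≥ κ / (1 + λt)`, the derivative of `(κ/λ) log (1 + λt)`, so comparing derivatives gives
the logarithmic lower bound. Since `α(0) ≥ 0` and `(κ/λ) log (1 + λt)` exceeds `c` once
`t > T`, `α` cannot stay below `c` on all of `[0, t]`.
-/

open Set Real

theorem sub_le_sub_of_deriv_le_deriv {f g : ℝ → ℝ} {a b : ℝ} (hab : a ≤ b)
    (hf : ContinuousOn f (Icc a b)) (hg : ContinuousOn g (Icc a b))
    (hf' : DifferentiableOn ℝ f (Ioo a b)) (hg' : DifferentiableOn ℝ g (Ioo a b))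
    (hle : ∀ x ∈ Ioo a b, deriv g x ≤ deriv f x) :
    g b - g a ≤ f b - f a := by
  have hmono : MonotoneOn (f - g) (Icc a b) := by
    refine monotoneOn_of_deriv_nonneg (convex_Icc a b) (hf.sub hg) ?_ ?_ <;> rw [interior_Icc]
    · exact hf'.sub hg'
    · intro x hx
      have hx' : Ioo a b ∈ nhds x := Ioo_mem_nhds hx.1 hx.2
      rw [deriv_sub (hf'.differentiableAt hx') (hg'.differentiableAt hx')]
      exact sub_nonneg.2 (hle x hx)
  have := hmono (left_mem_Icc.2 hab) (right_mem_Icc.2 hab) hab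
  simp only [Pi.sub_apply] at this
  linarith

theorem hasDerivAt_div_mul_log_one_add_mul {κ lam x : ℝ} (hlam : lam ≠ 0)
    (hx : 1 + lam * x ≠ 0) :
    HasDerivAt (fun s => κ / lam * log (1 + lam * s)) (κ / (1 + lam * x)) x := by
  have hlin : HasDerivAt (fun s => 1 + lam * s) lam x := by
    simpa using ((hasDerivAt_id x).const_mul lam).const_add 1
  exact ((hlin.log hx).const_mul (κ / lam)).congr_deriv (by field_simp)

theorem add_div_mul_log_le_of_le_deriv {f N : ℝ → ℝ} {κ lam t : ℝ} (hlam : 0 < lam)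
    (hκ : 0 ≤ κ) (ht : 0 ≤ t) (hf : ContinuousOn f (Icc 0 t))
    (hf' : DifferentiableOn ℝ f (Ioo 0 t)) (hN : ∀ x ∈ Ioo 0 t, 0 < N x)
    (hNle : ∀ x ∈ Ioo 0 t, N x ≤ 1 + lam * x) (hderiv : ∀ x ∈ Ioo 0 t, κ / N x ≤ deriv f x) :
    f 0 + κ / lam * log (1 + lam * t) ≤ f t := by
  have hpos : ∀ x ∈ Icc 0 t, 0 < 1 + lam * x := fun x hx => by nlinarith [hx.1]
  have hg : ∀ x ∈ Icc 0 t,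
      HasDerivAt (fun s => κ / lam * log (1 + lam * s)) (κ / (1 + lam * x)) x :=
    fun x hx => hasDerivAt_div_mul_log_one_add_mul hlam.ne' (hpos x hx).ne'
  have hcmp := sub_le_sub_of_deriv_le_deriv ht hf
    (fun x hx => (hg x hx).continuousAt.continuousWithinAt) hf'
    (fun x hx => (hg x (Ioo_subset_Icc_self hx)).differentiableAt.differentiableWithinAt)
    fun x hx => by
      rw [(hg x (Ioo_subset_Icc_self hx)).deriv]
      exact (div_le_div_of_nonneg_left hκ (hN x hx) (hNle x hx)).trans (hderiv x hx)
  simp only [mul_zero, add_zero, log_one, sub_zero] at hcmp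
  linarith

theorem lt_div_mul_log_one_add_mul {κ lam c t : ℝ} (hlam : 0 < lam) (hκ : 0 < κ)
    (ht : (exp (c * lam / κ) - 1) / lam < t) :
    c < κ / lam * log (1 + lam * t) := by
  have hexp : exp (c * lam / κ) < 1 + lam * t := by
    rw [div_lt_iff₀ hlam] at ht
    linarith
  have hlog : c * lam / κ < log (1 + lam * t) := by
    simpa using log_lt_log (exp_pos _) hexp
  calc c = κ / lam * (c * lam / κ) := by field_simp
    _ < κ / lam * log (1 + lam * t) := by gcongr

theorem alpha_log_growth_general (F0 F1 : ℝ → ℝ) (lam0 lam1 κ c : ℝ)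
    (hl0 : 0 < lam0) (hl1 : 0 < lam1) (hκ : 0 < κ)
    (hc : c ∈ Set.Ioo (0 : ℝ) 1)
    (hF0diff : Differentiable ℝ F0) (hF1diff : Differentiable ℝ F1)
    (hF0 : ∀ t ≥ (0 : ℝ), 0 ≤ F0 t)
    (hpos : ∀ t ≥ (0 : ℝ), 0 < F0 t + F1 t)
    (hbound : ∀ t ≥ (0 : ℝ), F0 t + F1 t ≤ 1 + (lam0 + lam1) * t)
    (α : ℝ → ℝ) (hα : ∀ t, α t = F0 t / (F0 t + F1 t))
    (hderiv : ∀ t ≥ (0 : ℝ), α t ≤ c → κ / (F0 t + F1 t) ≤ deriv α t) :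
    (∀ t ≥ (0 : ℝ), (∀ s ∈ Set.Icc 0 t, α s ≤ c) →
        α 0 + κ / (lam0 + lam1) * Real.log (1 + (lam0 + lam1) * t) ≤ α t) ∧
    (∀ t : ℝ, (Real.exp (c * (lam0 + lam1) / κ) - 1) / (lam0 + lam1) < t →
        ¬ ∀ s ∈ Set.Icc (0 : ℝ) t, α s ≤ c) := by
  have hlam : 0 < lam0 + lam1 := add_pos hl0 hl1
  have hαdiff : ∀ x ≥ (0 : ℝ), DifferentiableAt ℝ α x := fun x hx => by
    rw [show α = fun s => F0 s / (F0 s + F1 s) from funext hα]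
    exact (hF0diff x).div ((hF0diff x).add (hF1diff x)) (hpos x hx).ne'
  have growth : ∀ t ≥ (0 : ℝ), (∀ s ∈ Icc 0 t, α s ≤ c) →
      α 0 + κ / (lam0 + lam1) * log (1 + (lam0 + lam1) * t) ≤ α t := fun t ht hle =>
    add_div_mul_log_le_of_le_deriv hlam hκ.le ht
      (fun x hx => (hαdiff x hx.1).continuousAt.continuousWithinAt)
      (fun x hx => (hαdiff x hx.1.le).differentiableWithinAt)
      (fun x hx => hpos x hx.1.le) (fun x hx => hbound x hx.1.le)
      fun x hx => hderiv x hx.1.le (hle x (Ioo_subset_Icc_self hx))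
  refine ⟨growth, fun t hT hall => ?_⟩
  have hc0 := hc.1.le
  have ht : 0 ≤ t :=
    (div_nonneg (sub_nonneg.2 (one_le_exp (by positivity))) hlam.le).trans hT.le
  have hα0 : 0 ≤ α 0 := by
    rw [hα 0]
    exact div_nonneg (hF0 0 le_rfl) (hpos 0 le_rfl).le
  linarith [growth t ht hall, lt_div_mul_log_one_add_mul hlam hκ hT, hall t ⟨ht, le_rfl⟩]

/-- Logarithmic lower bound on the normalized coordinate
`α(t) = F₀(t)/(F₀(t)+F₁(t))`: if `F₀+F₁ ≤ 1+(λ₀+λ₁)t` and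
`α' ≥ κ/(F₀+F₁)` whenever `α ≤ c`, then as long as `α ≤ c` on `[0,t]`,
`α(t) ≥ α(0) + (κ/(λ₀+λ₁))·log(1+(λ₀+λ₁)t)`; in particular `α` exceeds `c`
by time `T = (exp(c(λ₀+λ₁)/κ) − 1)/(λ₀+λ₁)`. -/
theorem alpha_log_growth (F0 F1 : ℝ → ℝ) (lam0 lam1 κ c : ℝ)
    (hl0 : 0 < lam0) (hl1 : 0 < lam1) (hκ : 0 < κ)
    (hc : c ∈ Set.Ioo (0 : ℝ) 1)
    (hF0diff : Differentiable ℝ F0) (hF1diff : Differentiable ℝ F1)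
    (hF0 : ∀ t ≥ (0 : ℝ), 0 ≤ F0 t) (hF1 : ∀ t ≥ (0 : ℝ), 0 ≤ F1 t)
    (hpos : ∀ t ≥ (0 : ℝ), 0 < F0 t + F1 t)
    (hbound : ∀ t ≥ (0 : ℝ), F0 t + F1 t ≤ 1 + (lam0 + lam1) * t)
    (α : ℝ → ℝ) (hα : ∀ t, α t = F0 t / (F0 t + F1 t))
    (hderiv : ∀ t ≥ (0 : ℝ), α t ≤ c → κ / (F0 t + F1 t) ≤ deriv α t) :
    (∀ t ≥ (0 : ℝ), (∀ s ∈ Set.Icc 0 t, α s ≤ c) →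
        α 0 + κ / (lam0 + lam1) * Real.log (1 + (lam0 + lam1) * t) ≤ α t) ∧
    (∀ t : ℝ, (Real.exp (c * (lam0 + lam1) / κ) - 1) / (lam0 + lam1) < t →
        ¬ ∀ s ∈ Set.Icc (0 : ℝ) t, α s ≤ c) :=
  alpha_log_growth_general F0 F1 lam0 lam1 κ c hl0 hl1 hκ hc hF0diff hF1diff hF0 hpos hbound α hα
    hderiv
end

section
/- Comparison lemma for the coupled fluid system: let φ̄, f : [0,1] → ℝ with f(x) ≤ φ̄(x) for all x, and let (Z_0, Z_1) and (F_0, F_1) be differentiable solutions of Z_0' = λ_0 − μ_0 φ̄(Z_0/(Z_0+Z_1)), Z_1' = λ_1 − μ_1 Z_1/(Z_0+Z_1), and F_0' = λ_0 − μ_0 f(F_0/(F_0+F_1)), F_1' = λ_1 − μ_1 F_1/(F_0+F_1), with Z_0(0) ≤ F_0(0), Z_1(0) ≤ F_1(0), f continuous nondecreasing, and all quantities positive. Then Z_0(t) ≤ F_0(t) and Z_1(t) ≤ F_1(t) for all t ≥ 0. -/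
/-!
Perturb the dominating trajectory multiplicatively: with `c ε t = 1 + ε e^{K t}`, one shows
`Z_i < c ε · F_i` for every `ε > 0` and lets `ε → 0`. At a first time `T` where some
`Z_i = c · F_i` while `Z_j ≤ c · F_j` for all `j`, the share `Z_i / ∑ Z` is at least
`F_i / ∑ F`, so monotonicity of `f` and `f ≤ φ̄` give `Z_i' ≤ F_i'`; hence
`(Z_i - c F_i)' ≤ -ε e^{K T} (F_i' + K F_i)`, which is negative once `K` is large, because
`F` stays away from `0` on a compact time interval and `F_i'` is bounded below. A function
with negative derivative cannot reach `0` from below, a contradiction.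
-/

open Set Filter Topology Real

lemma HasDerivWithinAt.nonneg_of_le_left {g : ℝ → ℝ} {a T d : ℝ}
    (hd : HasDerivWithinAt g d (Ico a T) T) (haT : a < T)
    (hle : ∀ z ∈ Ico a T, g z ≤ g T) : 0 ≤ d := by
  by_contra! hneg
  have hslope := hd.limsup_slope_le' (fun h => lt_irrefl T h.2) hneg
  have : (𝓝[Ico a T] T).NeBot := mem_closure_iff_nhdsWithin_neBot.1 <| by
    rw [closure_Ico haT.ne]; exact right_mem_Icc.2 haT.le
  obtain ⟨z, hz, hzs⟩ := (hslope.and self_mem_nhdsWithin).exists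
  rw [slope_def_field] at hz
  exact hz.not_ge (div_nonneg_of_nonpos (sub_nonpos.2 (hle z hzs)) (sub_nonpos.2 hzs.2.le))

theorem forall_neg_of_deriv_neg_at_zero {ι : Type*} [Finite ι] {g g' : ι → ℝ → ℝ}
    {A : ℝ} (hcont : ∀ i, ContinuousOn (g i) (Icc 0 A))
    (hderiv : ∀ i, ∀ t ∈ Ioc 0 A, HasDerivAt (g i) (g' i t) t)
    (h0 : ∀ i, g i 0 < 0)
    (htouch : ∀ T ∈ Ioc 0 A, ∀ i, (∀ j, g j T ≤ 0) → g i T = 0 → g' i T < 0) :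
    ∀ i, ∀ t ∈ Icc 0 A, g i t < 0 := by
  by_contra! hbad
  obtain ⟨i₀, t₀, ht₀, hg₀⟩ := hbad
  set E := ⋃ i, {t ∈ Icc 0 A | 0 ≤ g i t}
  have hE : IsCompact E := isCompact_Icc.of_isClosed_subset
    (isClosed_iUnion_of_finite fun i =>
      (hcont i).preimage_isClosed_of_isClosed isClosed_Icc isClosed_Ici)
    (iUnion_subset fun i => sep_subset _ _)
  obtain ⟨T, hTE, hTmin⟩ := hE.exists_isLeast ⟨t₀, mem_iUnion.2 ⟨i₀, ht₀, hg₀⟩⟩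
  obtain ⟨i, hTA, hgiT⟩ := mem_iUnion.1 hTE
  have hT : 0 < T := hTA.1.lt_of_ne fun h => (h0 i).not_ge (h ▸ hgiT)
  have hbefore : ∀ j, ∀ s ∈ Ico 0 T, g j s < 0 := fun j s hs => not_le.1 fun h =>
    hs.2.not_ge (hTmin (mem_iUnion.2 ⟨j, ⟨hs.1, hs.2.le.trans hTA.2⟩, h⟩))
  have hatT : ∀ j, g j T ≤ 0 := fun j =>
    ((hcont j T hTA).mono (Ico_subset_Icc_self.trans (Icc_subset_Icc_right hTA.2))).closure_le
      (by rw [closure_Ico hT.ne]; exact right_mem_Icc.2 hT.le) continuousWithinAt_const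
      fun s hs => (hbefore j s hs).le
  have hzero : g i T = 0 := le_antisymm (hatT i) hgiT
  exact (htouch T ⟨hT, hTA.2⟩ i hatT hzero).not_ge
    ((hderiv i T ⟨hT, hTA.2⟩).hasDerivWithinAt.nonneg_of_le_left hT
      fun s hs => hzero ▸ (hbefore i s hs).le)

theorem le_of_deriv_le_at_touch {ι : Type*} [Finite ι] {u w u' w' : ι → ℝ → ℝ}
    {A K : ℝ} (hu : ∀ i, ∀ t ∈ Icc 0 A, HasDerivAt (u i) (u' i t) t)
    (hw : ∀ i, ∀ t ∈ Icc 0 A, HasDerivAt (w i) (w' i t) t)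
    (hw0 : ∀ i, 0 < w i 0) (hgrowth : ∀ i, ∀ t ∈ Ioc 0 A, 0 < w' i t + K * w i t)
    (h0 : ∀ i, u i 0 ≤ w i 0)
    (htouch : ∀ T ∈ Ioc 0 A, ∀ c > 1, ∀ i,
      (∀ j, u j T ≤ c * w j T) → u i T = c * w i T → u' i T ≤ w' i T) :
    ∀ i, ∀ t ∈ Icc 0 A, u i t ≤ w i t := by
  have hstrict : ∀ ε > 0, ∀ i, ∀ t ∈ Icc 0 A, u i t < (1 + ε * exp (K * t)) * w i t := by
    intro ε hε
    set c : ℝ → ℝ := fun s => 1 + ε * exp (K * s)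
    have hc : ∀ s, HasDerivAt c (ε * (exp (K * s) * K)) s := fun s =>
      (((hasDerivAt_id s).const_mul K).exp.const_mul ε).const_add 1
        |>.congr_deriv (by simp only [id]; ring)
    have hc1 : ∀ s, 1 < c s := fun s => lt_add_of_pos_right 1 (by positivity)
    have hg : ∀ i, ∀ t ∈ Icc 0 A, HasDerivAt (fun s => u i s - c s * w i s)
        (u' i t - (ε * (exp (K * t) * K) * w i t + c t * w' i t)) t := fun i t ht =>
      (hu i t ht).sub ((hc t).mul (hw i t ht))
    have hneg := forall_neg_of_deriv_neg_at_zero (g := fun i s => u i s - c s * w i s)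
      (fun i t ht => (hg i t ht).continuousAt.continuousWithinAt)
      (fun i t ht => hg i t (Ioc_subset_Icc_self ht))
      (fun i => by nlinarith [hw0 i, h0 i, hc1 0])
      (fun T hT i hle heq => by
        have hu'w' : u' i T ≤ w' i T :=
          htouch T hT (c T) (hc1 T) i (fun j => sub_nonpos.1 (hle j)) (sub_eq_zero.1 heq)
        have hdecay := mul_pos (mul_pos hε (exp_pos (K * T))) (hgrowth i T hT)
        simp only [c]
        linarith)
    exact fun i t ht => sub_neg.1 (hneg i t ht)
  intro i t ht
  have hlim : Tendsto (fun ε => (1 + ε * exp (K * t)) * w i t) (𝓝[>] 0) (𝓝 (w i t)) := by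
    have := ((continuous_const.add (continuous_id.mul continuous_const)).mul
      continuous_const).tendsto (0 : ℝ) (f := fun ε => (1 + ε * exp (K * t)) * w i t)
    simpa using this.mono_left nhdsWithin_le_nhds
  exact ge_of_tendsto hlim
    (eventually_nhdsWithin_of_forall fun ε hε => (hstrict ε hε i t ht).le)

lemma IsCompact.exists_forall_pos_add_mul {X : Type*} [TopologicalSpace X] {s : Set X}
    (hs : IsCompact s) {w v : X → ℝ} (hw : ContinuousOn w s) (hpos : ∀ x ∈ s, 0 < w x)
    {b : ℝ} (hv : ∀ x ∈ s, b ≤ v x) :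
    ∃ K₀, ∀ K ≥ K₀, ∀ x ∈ s, 0 < v x + K * w x := by
  obtain ⟨M, hM⟩ := hs.bddAbove_image (hw.inv₀ fun x hx => (hpos x hx).ne')
  refine ⟨(|b| + 1) * M, fun K hK x hx => ?_⟩
  have hwx := hpos x hx
  have hinv : (w x)⁻¹ ≤ M := hM ⟨x, hx, rfl⟩
  have hKw : |b| + 1 ≤ K * w x := by
    calc |b| + 1 = (|b| + 1) * (w x)⁻¹ * w x := by field_simp
      _ ≤ K * w x := by gcongr; exact (mul_le_mul_of_nonneg_left hinv (by positivity)).trans hK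
  linarith [neg_abs_le b, hv x hx]

section Fluid

variable {ι : Type*} [Fintype ι]

lemma div_sum_mem_Icc {x : ι → ℝ} (hx : ∀ j, 0 ≤ x j) (i : ι) :
    x i / ∑ j, x j ∈ Icc 0 1 :=
  ⟨div_nonneg (hx i) (Finset.sum_nonneg fun j _ => hx j),
    div_le_one_of_le₀ (Finset.single_le_sum (fun j _ => hx j) (Finset.mem_univ i))
      (Finset.sum_nonneg fun j _ => hx j)⟩

lemma div_sum_le_div_sum_of_le_mul {x y : ι → ℝ} {c : ℝ} {i : ι} (hx : 0 < ∑ j, x j)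
    (hxi : 0 ≤ x i) (hle : ∀ j, x j ≤ c * y j) (heq : x i = c * y i) :
    y i / ∑ j, y j ≤ x i / ∑ j, x j := by
  have hsum : ∑ j, x j ≤ c * ∑ j, y j := by
    rw [Finset.mul_sum]; exact Finset.sum_le_sum fun j _ => hle j
  have hc : c ≠ 0 := by rintro rfl; linarith [zero_mul (∑ j, y j)]
  calc y i / ∑ j, y j = x i / (c * ∑ j, y j) := by rw [heq, mul_div_mul_left _ _ hc]
    _ ≤ x i / ∑ j, x j := div_le_div_of_nonneg_left hxi hx hsum

noncomputable def fluidDrift (lam mu : ι → ℝ) (ψ : ι → ℝ → ℝ) (x : ι → ℝ)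
    (i : ι) : ℝ :=
  lam i - mu i * ψ i (x i / ∑ j, x j)

variable {lam mu : ι → ℝ} {ψ χ : ι → ℝ → ℝ}

lemma fluidDrift_le_of_le_mul (hmu : ∀ i, 0 ≤ mu i)
    (hle : ∀ i, ∀ r ∈ Icc 0 1, χ i r ≤ ψ i r)
    (hmono : ∀ i, MonotoneOn (χ i) (Icc 0 1)) {x y : ι → ℝ} (hx : ∀ j, 0 < x j)
    (hy : ∀ j, 0 ≤ y j) {c : ℝ} {i : ι} (hxy : ∀ j, x j ≤ c * y j)
    (heq : x i = c * y i) :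
    fluidDrift lam mu ψ x i ≤ fluidDrift lam mu χ y i := by
  have hxI := div_sum_mem_Icc (fun j => (hx j).le) i
  have hshare := div_sum_le_div_sum_of_le_mul
    (Finset.sum_pos (fun j _ => hx j) ⟨i, Finset.mem_univ i⟩) (hx i).le hxy heq
  have hχψ : χ i (y i / ∑ j, y j) ≤ ψ i (x i / ∑ j, x j) :=
    (hmono i (div_sum_mem_Icc hy i) hxI hshare).trans (hle i _ hxI)
  exact sub_le_sub_left (mul_le_mul_of_nonneg_left hχψ (hmu i)) _

lemma le_fluidDrift (hmu : ∀ i, 0 ≤ mu i) (hmono : ∀ i, MonotoneOn (χ i) (Icc 0 1))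
    {y : ι → ℝ} (hy : ∀ j, 0 ≤ y j) (i : ι) :
    lam i - mu i * χ i 1 ≤ fluidDrift lam mu χ y i :=
  sub_le_sub_left (mul_le_mul_of_nonneg_left
    (hmono i (div_sum_mem_Icc hy i) (right_mem_Icc.2 zero_le_one) (div_sum_mem_Icc hy i).2)
    (hmu i)) _

theorem fluid_le_of_le (hmu : ∀ i, 0 ≤ mu i) (hle : ∀ i, ∀ r ∈ Icc 0 1, χ i r ≤ ψ i r)
    (hmono : ∀ i, MonotoneOn (χ i) (Icc 0 1)) {Z F : ι → ℝ → ℝ}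
    (hZpos : ∀ i, ∀ t ≥ 0, 0 < Z i t) (hFpos : ∀ i, ∀ t ≥ 0, 0 < F i t)
    (hZ : ∀ i, ∀ t ≥ 0, HasDerivAt (Z i) (fluidDrift lam mu ψ (fun j => Z j t) i) t)
    (hF : ∀ i, ∀ t ≥ 0, HasDerivAt (F i) (fluidDrift lam mu χ (fun j => F j t) i) t)
    (h0 : ∀ i, Z i 0 ≤ F i 0) :
    ∀ t ≥ 0, ∀ i, Z i t ≤ F i t := by
  intro A hA i
  have hK : ∀ i, ∃ K₀, ∀ K ≥ K₀, ∀ t ∈ Icc 0 A,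
      0 < fluidDrift lam mu χ (fun j => F j t) i + K * F i t := fun i =>
    isCompact_Icc.exists_forall_pos_add_mul
      (fun t ht => (hF i t ht.1).continuousAt.continuousWithinAt) (fun t ht => hFpos i t ht.1)
      (fun t ht => le_fluidDrift hmu hmono (fun j => (hFpos j t ht.1).le) i)
  choose K₀ hK₀ using hK
  obtain ⟨K, hK⟩ := Finite.exists_le K₀
  exact le_of_deriv_le_at_touch (K := K) (fun i t ht => hZ i t ht.1) (fun i t ht => hF i t ht.1)
    (fun i => hFpos i 0 le_rfl) (fun i t ht => hK₀ i K (hK i) t (Ioc_subset_Icc_self ht)) h0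
    (fun T hT c _ i hZF heq => fluidDrift_le_of_le_mul hmu hle hmono
      (fun j => hZpos j T hT.1.le) (fun j => (hFpos j T hT.1.le).le) hZF heq)
    i A ⟨hA, le_rfl⟩

end Fluid

theorem fluid_comparison_general (lam0 lam1 mu0 mu1 : ℝ)
    (hm0 : 0 < mu0) (hm1 : 0 < mu1)
    (φ f : ℝ → ℝ) (hle : ∀ x ∈ Icc (0 : ℝ) 1, f x ≤ φ x)
    (hfmono : MonotoneOn f (Icc 0 1))
    (Z0 Z1 F0 F1 : ℝ → ℝ)
    (hZ0pos : ∀ t ≥ (0 : ℝ), 0 < Z0 t) (hZ1pos : ∀ t ≥ (0 : ℝ), 0 < Z1 t)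
    (hF0pos : ∀ t ≥ (0 : ℝ), 0 < F0 t) (hF1pos : ∀ t ≥ (0 : ℝ), 0 < F1 t)
    (hZ0 : ∀ t ≥ (0 : ℝ),
      HasDerivAt Z0 (lam0 - mu0 * φ (Z0 t / (Z0 t + Z1 t))) t)
    (hZ1 : ∀ t ≥ (0 : ℝ),
      HasDerivAt Z1 (lam1 - mu1 * (Z1 t / (Z0 t + Z1 t))) t)
    (hF0 : ∀ t ≥ (0 : ℝ),
      HasDerivAt F0 (lam0 - mu0 * f (F0 t / (F0 t + F1 t))) t)
    (hF1 : ∀ t ≥ (0 : ℝ),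
      HasDerivAt F1 (lam1 - mu1 * (F1 t / (F0 t + F1 t))) t)
    (hinit0 : Z0 0 ≤ F0 0) (hinit1 : Z1 0 ≤ F1 0) :
    ∀ t ≥ (0 : ℝ), Z0 t ≤ F0 t ∧ Z1 t ≤ F1 t := by
  have hcomp := fluid_le_of_le (lam := ![lam0, lam1]) (mu := ![mu0, mu1]) (ψ := ![φ, id])
    (χ := ![f, id]) (Z := ![Z0, Z1]) (F := ![F0, F1])
    (Fin.forall_fin_two.2 ⟨hm0.le, hm1.le⟩) (Fin.forall_fin_two.2 ⟨hle, fun _ _ => le_rfl⟩)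
    (Fin.forall_fin_two.2 ⟨hfmono, monotoneOn_id⟩)
    (Fin.forall_fin_two.2 ⟨hZ0pos, hZ1pos⟩) (Fin.forall_fin_two.2 ⟨hF0pos, hF1pos⟩)
    (Fin.forall_fin_two.2 ⟨by simpa [fluidDrift] using hZ0, by simpa [fluidDrift] using hZ1⟩)
    (Fin.forall_fin_two.2 ⟨by simpa [fluidDrift] using hF0, by simpa [fluidDrift] using hF1⟩)
    (Fin.forall_fin_two.2 ⟨hinit0, hinit1⟩)
  exact fun t ht => ⟨hcomp t ht 0, hcomp t ht 1⟩

/-- Comparison lemma for the coupled fluid system: if `f ≤ φ̄` pointwise on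
`[0,1]`, `f` is continuous and nondecreasing, the `Z`-system is driven by
`φ̄` and the `F`-system by `f`, and `Z₀(0) ≤ F₀(0)`, `Z₁(0) ≤ F₁(0)`, then
`Z₀(t) ≤ F₀(t)` and `Z₁(t) ≤ F₁(t)` for all `t ≥ 0`. -/
theorem fluid_comparison (lam0 lam1 mu0 mu1 : ℝ)
    (hl0 : 0 < lam0) (hl1 : 0 < lam1) (hm0 : 0 < mu0) (hm1 : 0 < mu1)
    (φ f : ℝ → ℝ) (hle : ∀ x ∈ Icc (0 : ℝ) 1, f x ≤ φ x)
    (hfcont : ContinuousOn f (Icc 0 1)) (hfmono : MonotoneOn f (Icc 0 1))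
    (Z0 Z1 F0 F1 : ℝ → ℝ)
    (hZ0pos : ∀ t ≥ (0 : ℝ), 0 < Z0 t) (hZ1pos : ∀ t ≥ (0 : ℝ), 0 < Z1 t)
    (hF0pos : ∀ t ≥ (0 : ℝ), 0 < F0 t) (hF1pos : ∀ t ≥ (0 : ℝ), 0 < F1 t)
    (hZ0 : ∀ t ≥ (0 : ℝ),
      HasDerivAt Z0 (lam0 - mu0 * φ (Z0 t / (Z0 t + Z1 t))) t)
    (hZ1 : ∀ t ≥ (0 : ℝ),
      HasDerivAt Z1 (lam1 - mu1 * (Z1 t / (Z0 t + Z1 t))) t)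
    (hF0 : ∀ t ≥ (0 : ℝ),
      HasDerivAt F0 (lam0 - mu0 * f (F0 t / (F0 t + F1 t))) t)
    (hF1 : ∀ t ≥ (0 : ℝ),
      HasDerivAt F1 (lam1 - mu1 * (F1 t / (F0 t + F1 t))) t)
    (hinit0 : Z0 0 ≤ F0 0) (hinit1 : Z1 0 ≤ F1 0) :
    ∀ t ≥ (0 : ℝ), Z0 t ≤ F0 t ∧ Z1 t ≤ F1 t :=
  fluid_comparison_general lam0 lam1 mu0 mu1 hm0 hm1 φ f hle hfmono Z0 Z1 F0 F1 hZ0pos hZ1pos hF0pos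
    hF1pos hZ0 hZ1 hF0 hF1 hinit0 hinit1
end

section
/- For the L-link quasi-stationary linear network, the unique fixed point γ(α) of the deterministic scaled dynamics satisfies the explicit recursion γ_k(α) = max( ρ_k, (ρ_k/(1−ρ_k)) · min( α, min_{2 ≤ j ≤ k−1} (1−ρ_j) ) ) for 2 ≤ k ≤ L; and the corresponding end-to-end throughput is ψ̃_0(α, γ(α)) = min( α, min_{2 ≤ k ≤ L} (1−ρ_k) ). -/
/-- Output rate of the end-to-end class after successive links in the
quasi-stationary linear network (`M` local classes, `M + 1` links of
capacity 1, local class `j ∈ {1, …, M}` has input rate `x j`):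
`theta x α j = θ̃_0^{j+1}(α, x)` with `θ̃_0^1 = α`. -/
noncomputable def theta (x : ℕ → ℝ) (α : ℝ) : ℕ → ℝ
  | 0 => α
  | j + 1 => min (theta x α j) (theta x α j / (theta x α j + x (j + 1)))

/-- Quasi-stationary throughput of local class `j ≥ 1`. -/
noncomputable def psi (x : ℕ → ℝ) (α : ℝ) (j : ℕ) : ℝ :=
  min (x j) (x j / (theta x α (j - 1) + x j))

/-- `mcap ρ α j = min(α, min_{1 ≤ j' ≤ j} (1 − ρ j'))`. -/
noncomputable def mcap (ρ : ℕ → ℝ) (α : ℝ) : ℕ → ℝ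
  | 0 => α
  | j + 1 => min (mcap ρ α j) (1 - ρ (j + 1))

/-- The explicit fixed point of the scaled quasi-stationary dynamics:
`γ_j = max(ρ_j, (ρ_j/(1−ρ_j))·min(α, min_{j' < j}(1−ρ_{j'})))` solves the
fixed-point equations `ψ̃_j(α, γ) = ρ_j` for every local class `j`, and the
end-to-end throughput is `θ̃_0^L(α, γ) = min(α, min_j (1−ρ_j))`. -/
theorem quasi_stationary_fixed_point (M : ℕ) (ρ : ℕ → ℝ)
    (hρ : ∀ j, 1 ≤ j → j ≤ M → 0 < ρ j ∧ ρ j < 1)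
    (α : ℝ) (hα : α ∈ Set.Icc (0 : ℝ) 1)
    (γ : ℕ → ℝ)
    (hγ : ∀ j, 1 ≤ j → j ≤ M →
      γ j = max (ρ j) (ρ j / (1 - ρ j) * mcap ρ α (j - 1))) :
    (∀ j, 1 ≤ j → j ≤ M → psi γ α j = ρ j) ∧
    theta γ α M = mcap ρ α M := by
  obtain ⟨hα0, hα1⟩ := hα
  have key : ∀ j, j ≤ M → theta γ α j = mcap ρ α j ∧
      0 ≤ mcap ρ α j ∧ mcap ρ α j ≤ 1 := by
    intro j
    induction j with
    | zero => intro _; exact ⟨rfl, hα0, hα1⟩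
    | succ j ih =>
      intro hjM
      obtain ⟨hth, hm0, hm1⟩ := ih (Nat.le_of_succ_le hjM)
      set m := mcap ρ α j with hm
      obtain ⟨hr0, hr1⟩ := hρ (j + 1) (Nat.succ_le_succ (Nat.zero_le j)) hjM
      set r := ρ (j + 1) with hr
      have hγj : γ (j + 1) = max r (r / (1 - r) * m) := by
        have := hγ (j + 1) (Nat.succ_le_succ (Nat.zero_le j)) hjM
        simpa using this
      have h1r : 0 < 1 - r := by linarith
      have hmc : mcap ρ α (j + 1) = min m (1 - r) := rfl
      have hbounds : 0 ≤ mcap ρ α (j + 1) ∧ mcap ρ α (j + 1) ≤ 1 := by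
        rw [hmc]
        exact ⟨le_min hm0 (le_of_lt h1r), le_trans (min_le_left _ _) hm1⟩
      refine ⟨?_, hbounds.1, hbounds.2⟩
      rw [show theta γ α (j + 1)
          = min (theta γ α j) (theta γ α j / (theta γ α j + γ (j + 1))) from rfl,
        hth, hγj, hmc]
      rcases le_or_gt m (1 - r) with hcase | hcase
      · have hg : max r (r / (1 - r) * m) = r := by
          apply max_eq_left
          rw [div_mul_eq_mul_div, div_le_iff₀ h1r]
          nlinarith
        rw [hg]
        have hden : 0 < m + r := by linarith
        have hfrac : m ≤ m / (m + r) := by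
          rw [le_div_iff₀ hden]
          nlinarith
        rw [min_eq_left hfrac, min_eq_left hcase]
      · have hmpos : 0 < m := by linarith
        have hg : max r (r / (1 - r) * m) = r / (1 - r) * m := by
          apply max_eq_right
          rw [div_mul_eq_mul_div, le_div_iff₀ h1r]
          nlinarith
        rw [hg]
        have hsum : m + r / (1 - r) * m = m / (1 - r) := by
          field_simp
          ring
        rw [hsum]
        have h2 : m / (m / (1 - r)) = 1 - r := by
          field_simp
        rw [h2]
  refine ⟨?_, (key M le_rfl).1⟩
  intro j h1 hjM
  obtain ⟨k, rfl⟩ : ∃ k, j = k + 1 := ⟨j - 1, (Nat.succ_pred_eq_of_pos h1).symm⟩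
  obtain ⟨hth, hm0, hm1⟩ := key k (Nat.le_of_succ_le hjM)
  set m := mcap ρ α k with hm
  obtain ⟨hr0, hr1⟩ := hρ (k + 1) (Nat.succ_le_succ (Nat.zero_le k)) hjM
  set r := ρ (k + 1) with hr
  have h1r : 0 < 1 - r := by linarith
  have hγj : γ (k + 1) = max r (r / (1 - r) * m) := by
    have := hγ (k + 1) (Nat.succ_le_succ (Nat.zero_le k)) hjM
    simpa using this
  have hpsi : psi γ α (k + 1)
      = min (γ (k + 1)) (γ (k + 1) / (theta γ α k + γ (k + 1))) := by
    simp [psi]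
  rw [hpsi, hth, hγj]
  rcases le_or_gt m (1 - r) with hcase | hcase
  · have hg : max r (r / (1 - r) * m) = r := by
      apply max_eq_left
      rw [div_mul_eq_mul_div, div_le_iff₀ h1r]
      nlinarith
    rw [hg]
    have hden : 0 < m + r := by linarith
    have hfrac : r ≤ r / (m + r) := by
      rw [le_div_iff₀ hden]
      nlinarith
    rw [min_eq_left hfrac]
  · have hmpos : 0 < m := by linarith
    have hg : max r (r / (1 - r) * m) = r / (1 - r) * m := by
      apply max_eq_right
      rw [div_mul_eq_mul_div, le_div_iff₀ h1r]
      nlinarith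
    rw [hg]
    have hsum : m + r / (1 - r) * m = m / (1 - r) := by
      field_simp
      ring
    rw [hsum]
    have h2 : r / (1 - r) * m / (m / (1 - r)) = r := by
      field_simp
    rw [h2]
    apply min_eq_right
    rw [div_mul_eq_mul_div, le_div_iff₀ h1r]
    nlinarith
end
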